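/- arXiv:1908.00770 — 4 statements merged into one kernel-verified Lean document; each statement's English description precedes it below -/
import Mathlib

section
/- Let G be a groupoid and let C be a set of arrows of G containing every identity arrow. Suppose p and q are positive integers such that for every unit w the source fiber Cw is finite with p ≤ |Cw|, and the range fiber wC is finite with |wC| ≤ q. Let ε > 0 and let δ be a real number with δ ≥ max(0, 1 − (p/q)·(1 − ε)). Let A be a nonempty set of arrows of G, all of whose source fibers Au are finite, which is (C,ε)-invariant. Then the family {Ca : a ∈ I_C(A)} is a (1 − δ)-even covering of A with multiplicity q, in the following sense: for every unit u ∈ s(A), (a) every g ∈ Au belongs to Ca for at most q elements a ∈ I_C(Au), and (b) the sum over a ∈ I_C(Au) of |Ca| is at least (1 − δ)·q·|Au|. -/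
open CategoryTheory

/-- The type of arrows of a groupoid `G`. -/
structure GArr (G : Type*) [Groupoid G] where
  src : G
  tgt : G
  hom : src ⟶ tgt

namespace GArr

variable {G : Type*} [Groupoid G]

/-- The composite arrow `a * b` (apply `b` first, then `a`), defined when `s(a) = r(b)`,
i.e. when `b.tgt = a.src`. -/
def comp (a b : GArr G) (h : b.tgt = a.src) : GArr G :=
  ⟨b.src, a.tgt, b.hom ≫ eqToHom h ≫ a.hom⟩

/-- The identity arrow at a unit `u`. -/
def unit (u : G) : GArr G := ⟨u, u, 𝟙 u⟩

/-- The inverse arrow. -/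
def inv (a : GArr G) : GArr G := ⟨a.tgt, a.src, Groupoid.inv a.hom⟩

end GArr

variable {G : Type*} [Groupoid G]

/-- The product set `A B = {ab : a ∈ A, b ∈ B, s(a) = r(b)}`. -/
def setProd (A B : Set (GArr G)) : Set (GArr G) :=
  {x | ∃ a ∈ A, ∃ b ∈ B, ∃ h : b.tgt = a.src, x = a.comp b h}

/-- For a set of arrows `C` and an arrow `g`, `C g = {cg : c ∈ C, s(c) = r(g)}`. -/
def smulSet (C : Set (GArr G)) (g : GArr G) : Set (GArr G) :=
  {x | ∃ c ∈ C, ∃ h : g.tgt = c.src, x = c.comp g h}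

/-- The source fiber `A u = {a ∈ A : s(a) = u}`. -/
def srcFiber (A : Set (GArr G)) (u : G) : Set (GArr G) := {a ∈ A | a.src = u}

/-- The range fiber `u A = {a ∈ A : r(a) = u}`. -/
def tgtFiber (A : Set (GArr G)) (u : G) : Set (GArr G) := {a ∈ A | a.tgt = u}

/-- The `C`-boundary `∂_C(B)` of a set of arrows `B`. -/
def cBoundary (C B : Set (GArr G)) : Set (GArr G) :=
  {g | (smulSet C g ∩ B).Nonempty ∧ (smulSet C g ∩ Bᶜ).Nonempty}


open scoped Classical in
noncomputable def rmul (c g : GArr G) : GArr G := if h : g.tgt = c.src then c.comp g h else c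

lemma comp_right_inj {g c₁ c₂ : GArr G} (h₁ : g.tgt = c₁.src) (h₂ : g.tgt = c₂.src)
    (he : c₁.comp g h₁ = c₂.comp g h₂) : c₁ = c₂ := by
  obtain ⟨s₁, t₁, f₁⟩ := c₁
  obtain ⟨s₂, t₂, f₂⟩ := c₂
  obtain ⟨sg, tg, fg⟩ := g
  dsimp at h₁ h₂
  subst h₁; subst h₂
  rw [GArr.mk.injEq] at he
  obtain ⟨-, ht, hh⟩ := he
  subst ht
  replace hh := eq_of_heq hh
  simp only [GArr.comp, eqToHom_refl, Category.id_comp, GArr.mk.injEq, heq_iff_eq, true_and] at hh ⊢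
  have h := (cancel_epi fg).mp hh
  exact congrArg (GArr.mk tg t₁) (h.trans (Category.id_comp _))

lemma smulSet_eq_image (C : Set (GArr G)) (g : GArr G) :
    smulSet C g = (fun c => rmul c g) '' srcFiber C g.tgt := by
  ext x
  constructor
  · rintro ⟨c, hc, h, rfl⟩
    refine ⟨c, ⟨hc, h.symm⟩, ?_⟩
    simp only [rmul, dif_pos h]
  · rintro ⟨c, ⟨hc, hsrc⟩, rfl⟩
    refine ⟨c, hc, hsrc.symm, ?_⟩
    simp only [rmul, dif_pos hsrc.symm]

lemma rmul_injOn (C : Set (GArr G)) (g : GArr G) :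
    Set.InjOn (fun c => rmul c g) (srcFiber C g.tgt) := by
  rintro c₁ ⟨-, h₁⟩ c₂ ⟨-, h₂⟩ he
  simp only [rmul, dif_pos h₁.symm, dif_pos h₂.symm] at he
  exact comp_right_inj h₁.symm h₂.symm he

lemma ncard_smulSet (C : Set (GArr G)) (g : GArr G) :
    (smulSet C g).ncard = (srcFiber C g.tgt).ncard := by
  rw [smulSet_eq_image, Set.ncard_image_of_injOn (rmul_injOn C g)]

lemma smulSet_finite (C : Set (GArr G)) (g : GArr G) (h : (srcFiber C g.tgt).Finite) :
    (smulSet C g).Finite := by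
  rw [smulSet_eq_image]; exact h.image _

lemma inv_comp_cancel (c a : GArr G) (h : a.tgt = c.src)
    (h' : (c.comp a h).tgt = c.inv.src) : c.inv.comp (c.comp a h) h' = a := by
  obtain ⟨s₁, t₁, f₁⟩ := c
  obtain ⟨s₂, t₂, f₂⟩ := a
  dsimp at h
  subst h
  simp [GArr.comp, GArr.inv, Groupoid.comp_inv]

lemma mem_image_of_smul {C : Set (GArr G)} {g a : GArr G} (hg : g ∈ smulSet C a) :
    a ∈ (fun c => rmul (GArr.inv c) g) '' tgtFiber C g.tgt := by
  obtain ⟨c, hc, h, rfl⟩ := hg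
  refine ⟨c, ⟨hc, rfl⟩, ?_⟩
  have h' : (c.comp a h).tgt = (GArr.inv c).src := rfl
  simp only [rmul, dif_pos h']
  exact inv_comp_cancel c a h h'

/-- cf. Lemma 3.6. Let `C` be a set of arrows containing all identity arrows,
with `p ≤ |Cw|` and `|wC| ≤ q` for all units `w`. If `δ ≥ max 0 (1 − (p/q)·(1 − ε))` and `A`
is a nonempty `(C, ε)`-invariant set of arrows with finite source fibers, then
`{Ca : a ∈ I_C(A)}` is a `(1 − δ)`-even covering of `A` with multiplicity `q`: for every unit
`u ∈ s(A)`, every `g ∈ Au` lies in `Ca` for at most `q` elements `a ∈ I_C(Au)`, and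
`∑_{a ∈ I_C(Au)} |Ca| ≥ (1 − δ)·q·|Au|`. -/
theorem even_covering_of_invariant {G : Type*} [Groupoid G]
    (C : Set (GArr G)) (hCunit : ∀ u : G, GArr.unit u ∈ C)
    (p q : ℕ) (hp : 0 < p) (hq : 0 < q)
    (hCsfin : ∀ w : G, (srcFiber C w).Finite)
    (hCsp : ∀ w : G, p ≤ (srcFiber C w).ncard)
    (hCtfin : ∀ w : G, (tgtFiber C w).Finite)
    (hCtq : ∀ w : G, (tgtFiber C w).ncard ≤ q)
    (ε : ℝ) (hε : 0 < ε)
    (δ : ℝ) (hδ : max 0 (1 - (p / q : ℝ) * (1 - ε)) ≤ δ)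
    (A : Set (GArr G)) (hA : A.Nonempty)
    (hAfin : ∀ u : G, (srcFiber A u).Finite)
    (hinv : ∀ u : G, (∃ a ∈ A, a.src = u) →
      (1 - ε) * ((srcFiber A u).ncard : ℝ) ≤
        (({a ∈ srcFiber A u | smulSet C a ⊆ srcFiber A u}).ncard : ℝ)) :
    ∀ u : G, (∃ a ∈ A, a.src = u) →
      (∀ g ∈ srcFiber A u,
        ({a ∈ srcFiber A u | smulSet C a ⊆ srcFiber A u ∧ g ∈ smulSet C a}).ncard ≤ q) ∧
      (1 - δ) * q * ((srcFiber A u).ncard : ℝ) ≤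
        ∑ a ∈ (Set.Finite.subset (hAfin u)
            (fun a ha => ha.1 : {a ∈ srcFiber A u | smulSet C a ⊆ srcFiber A u} ⊆
              srcFiber A u)).toFinset,
          ((smulSet C a).ncard : ℝ) := by
  intro u hu
  constructor
  · -- multiplicity bound
    intro g hg
    have hsub : {a ∈ srcFiber A u | smulSet C a ⊆ srcFiber A u ∧ g ∈ smulSet C a} ⊆
        (fun c => rmul (GArr.inv c) g) '' tgtFiber C g.tgt := by
      rintro a ⟨-, -, hga⟩
      exact mem_image_of_smul hga
    calc ({a ∈ srcFiber A u | smulSet C a ⊆ srcFiber A u ∧ g ∈ smulSet C a}).ncard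
        ≤ ((fun c => rmul (GArr.inv c) g) '' tgtFiber C g.tgt).ncard :=
          Set.ncard_le_ncard hsub ((hCtfin g.tgt).image _)
      _ ≤ (tgtFiber C g.tgt).ncard := Set.ncard_image_le (hCtfin g.tgt)
      _ ≤ q := hCtq g.tgt
  · -- sum bound
    set I : Set (GArr G) := {a ∈ srcFiber A u | smulSet C a ⊆ srcFiber A u} with hI
    set F := (Set.Finite.subset (hAfin u)
        (fun a ha => ha.1 : I ⊆ srcFiber A u)).toFinset with hF
    have hcard : (F.card : ℝ) = (I.ncard : ℝ) := by
      rw [Set.ncard_eq_toFinset_card _ (Set.Finite.subset (hAfin u)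
        (fun a ha => ha.1 : I ⊆ srcFiber A u))]
    have hterm : ∀ a ∈ F, (p : ℝ) ≤ ((smulSet C a).ncard : ℝ) := by
      intro a _
      rw [ncard_smulSet]
      exact_mod_cast hCsp a.tgt
    have hsum : (p : ℝ) * F.card ≤ ∑ a ∈ F, ((smulSet C a).ncard : ℝ) := by
      calc (p : ℝ) * F.card = ∑ _a ∈ F, (p : ℝ) := by rw [Finset.sum_const, nsmul_eq_mul, mul_comm]
        _ ≤ _ := Finset.sum_le_sum hterm
    have hinvu := hinv u hu
    have h1 : (1 - δ) * q ≤ (p : ℝ) * (1 - ε) := by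
      have h2 : 1 - (p / q : ℝ) * (1 - ε) ≤ δ := le_trans (le_max_right _ _) hδ
      have hq0 : (0 : ℝ) < q := by exact_mod_cast hq
      rw [div_mul_eq_mul_div] at h2
      have h3 : 1 - δ ≤ (p : ℝ) * (1 - ε) / q := by linarith
      exact (le_div_iff₀ hq0).mp h3
    have hAnn : (0 : ℝ) ≤ ((srcFiber A u).ncard : ℝ) := by positivity
    calc (1 - δ) * q * ((srcFiber A u).ncard : ℝ)
        ≤ (p : ℝ) * (1 - ε) * ((srcFiber A u).ncard : ℝ) :=
          mul_le_mul_of_nonneg_right h1 hAnn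
      _ = (p : ℝ) * ((1 - ε) * ((srcFiber A u).ncard : ℝ)) := by ring
      _ ≤ (p : ℝ) * (I.ncard : ℝ) := by
          apply mul_le_mul_of_nonneg_left hinvu (by positivity)
      _ = (p : ℝ) * F.card := by rw [hcard]
      _ ≤ _ := hsum
end

section
/- Let G be a groupoid and let A be a set of arrows of G such that every source fiber Au is finite. Let (A_i)_{i∈I} be a finite family of subsets of A, let M be a positive integer, let 0 < λ ≤ 1 and 0 ≤ ε ≤ 1/2, and assume that (A_i)_{i∈I} is a λ-even covering of A with multiplicity M, i.e., for every unit u ∈ s(A): every g ∈ Au belongs to A_i u for at most M indices i ∈ I, and ∑_{i∈I} |A_i u| ≥ λ·M·|Au|. Then for each unit u ∈ s(A) there exists a subset J_u ⊆ I such that the family (A_j u)_{j∈J_u} is ε-disjoint and |⋃_{j∈J_u} A_j u| ≥ ε·λ·|Au|. -/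
open CategoryTheory

variable {G : Type*} [Groupoid G]

/-!
Take an `ε`-disjoint subfamily `J` of maximal size, with union `U`. Every member `A_i` has at
least an `ε`-fraction of its points in `U`: otherwise `A_i \ U` could serve as the disjoint part
of `A_i`, and adding `i` to `J` would keep it `ε`-disjoint. Summing over `i` and double counting
with multiplicity at most `M` gives `ε λ M |Au| ≤ ε ∑ |A_i u| ≤ ∑ |A_i u ∩ U| ≤ M |U|`.
-/

open Finset

section

variable {α I : Type*} {F : I → Set α} {ε : ℝ} {J : Finset I}

def EpsDisjoint (ε : ℝ) (F : I → Set α) (J : Finset I) : Prop :=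
  ∃ Ahat : I → Set α, (∀ j ∈ J, Ahat j ⊆ F j) ∧
    (∀ j ∈ J, ∀ k ∈ J, j ≠ k → Disjoint (Ahat j) (Ahat k)) ∧
    (∀ j ∈ J, (1 - ε) * ((F j).ncard : ℝ) ≤ ((Ahat j).ncard : ℝ))

theorem epsDisjoint_empty : EpsDisjoint ε F ∅ :=
  ⟨fun _ ↦ ∅, by simp, by simp, by simp⟩

theorem EpsDisjoint.insert_of_le_ncard_sdiff [DecidableEq I] (hJ : EpsDisjoint ε F J) {i : I}
    (hi : (1 - ε) * ((F i).ncard : ℝ) ≤ ((F i \ ⋃ j ∈ J, F j).ncard : ℝ)) :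
    EpsDisjoint ε F (insert i J) := by
  obtain ⟨Ahat, hsub, hdisj, hcard⟩ := hJ
  have mem_of_ne {j} (hj : j ∈ insert i J) (hji : j ≠ i) : j ∈ J :=
    (mem_insert.1 hj).resolve_left hji
  have hdisj_new {k} (hk : k ∈ J) : Disjoint (F i \ ⋃ j ∈ J, F j) (Ahat k) :=
    Set.disjoint_sdiff_left.mono_right ((hsub k hk).trans (subset_set_biUnion_of_mem hk))
  refine ⟨Function.update Ahat i (F i \ ⋃ j ∈ J, F j), fun j hj ↦ ?_, fun j hj k hk hjk ↦ ?_,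
    fun j hj ↦ ?_⟩
  · rcases eq_or_ne j i with rfl | hji
    · simp
    · simpa [hji] using hsub j (mem_of_ne hj hji)
  · by_cases hji : j = i <;> by_cases hki : k = i
    · exact absurd (hji.trans hki.symm) hjk
    · subst hji; simpa [hki] using hdisj_new (mem_of_ne hk hki)
    · subst hki; simpa [hji] using (hdisj_new (mem_of_ne hj hji)).symm
    · simpa [hji, hki] using hdisj j (mem_of_ne hj hji) k (mem_of_ne hk hki) hjk
  · rcases eq_or_ne j i with rfl | hji
    · simpa using hi
    · simpa [hji] using hcard j (mem_of_ne hj hji)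

theorem exists_epsDisjoint_mul_ncard_le_ncard_inter [Fintype I] (hε : ε ≤ 1)
    (hF : ∀ i, (F i).Finite) :
    ∃ J, EpsDisjoint ε F J ∧ ∀ i, ε * ((F i).ncard : ℝ) ≤ ((F i ∩ ⋃ j ∈ J, F j).ncard : ℝ) := by
  classical
  obtain ⟨J, hJ, hmax⟩ := exists_max_image {J | EpsDisjoint ε F J} card
    ⟨∅, by simpa using epsDisjoint_empty⟩
  rw [mem_filter_univ] at hJ
  refine ⟨J, hJ, fun i ↦ ?_⟩
  by_cases hiJ : i ∈ J
  · rw [Set.inter_eq_self_of_subset_left (subset_set_biUnion_of_mem hiJ)]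
    exact mul_le_of_le_one_left (Nat.cast_nonneg _) hε
  · by_contra! hlt
    have hsplit :
        ((F i ∩ ⋃ j ∈ J, F j).ncard : ℝ) + (F i \ ⋃ j ∈ J, F j).ncard = (F i).ncard := by
      exact_mod_cast Set.ncard_inter_add_ncard_sdiff_eq_ncard (F i) (⋃ j ∈ J, F j) (hF i)
    have hins := hmax _ ((mem_filter_univ _).2 (hJ.insert_of_le_ncard_sdiff (i := i) (by
      linarith)))
    rw [card_insert_of_notMem hiJ] at hins
    omega

theorem sum_ncard_inter_le_mul_ncard [Fintype I] {U : Set α} (hU : U.Finite) {M : ℕ}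
    (hmult : ∀ g ∈ U, {i | g ∈ F i}.ncard ≤ M) :
    ∑ i, (F i ∩ U).ncard ≤ M * U.ncard := by
  classical
  lift U to Finset α using hU
  rw [Set.ncard_coe_finset]
  calc ∑ i, (F i ∩ U).ncard
      = ∑ i, #(U.bipartiteAbove (fun i g ↦ g ∈ F i) i) := by
        refine sum_congr rfl fun i _ ↦ ?_
        rw [← Set.ncard_coe_finset, coe_bipartiteAbove, Set.inter_comm]
        rfl
    _ = ∑ g ∈ U, #(univ.bipartiteBelow (fun i g ↦ g ∈ F i) g) :=
        sum_card_bipartiteAbove_eq_sum_card_bipartiteBelow _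
    _ ≤ ∑ _g ∈ U, M := sum_le_sum fun g hg ↦ by
        simpa [← Set.ncard_coe_finset, coe_bipartiteBelow] using hmult g hg
    _ = M * #U := by rw [sum_const, smul_eq_mul, mul_comm]

theorem exists_epsDisjoint_mul_ncard_le_ncard_biUnion [Fintype I] {S : Set α} (hS : S.Finite)
    (hFS : ∀ i, F i ⊆ S) {M : ℕ} (hM : 0 < M) {lam : ℝ} (hε0 : 0 ≤ ε) (hε1 : ε ≤ 1)
    (hmult : ∀ g ∈ S, {i | g ∈ F i}.ncard ≤ M)
    (hcover : lam * M * (S.ncard : ℝ) ≤ ∑ i, ((F i).ncard : ℝ)) :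
    ∃ J, EpsDisjoint ε F J ∧ ε * lam * (S.ncard : ℝ) ≤ ((⋃ j ∈ J, F j).ncard : ℝ) := by
  obtain ⟨J, hJ, hlarge⟩ :=
    exists_epsDisjoint_mul_ncard_le_ncard_inter hε1 fun i ↦ hS.subset (hFS i)
  refine ⟨J, hJ, ?_⟩
  have hUS : (⋃ j ∈ J, F j) ⊆ S := Set.iUnion₂_subset fun j _ ↦ hFS j
  have hdouble : ∑ i, ((F i ∩ ⋃ j ∈ J, F j).ncard : ℝ) ≤ M * ((⋃ j ∈ J, F j).ncard : ℝ) := by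
    exact_mod_cast sum_ncard_inter_le_mul_ncard (hS.subset hUS) fun g hg ↦ hmult g (hUS hg)
  refine le_of_mul_le_mul_left ?_ (Nat.cast_pos.2 hM : (0 : ℝ) < M)
  calc (M : ℝ) * (ε * lam * S.ncard) = ε * (lam * M * S.ncard) := by ring
    _ ≤ ε * ∑ i, ((F i).ncard : ℝ) := mul_le_mul_of_nonneg_left hcover hε0
    _ = ∑ i, ε * ((F i).ncard : ℝ) := mul_sum _ _ _
    _ ≤ ∑ i, ((F i ∩ ⋃ j ∈ J, F j).ncard : ℝ) := sum_le_sum fun i _ ↦ hlarge i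
    _ ≤ M * ((⋃ j ∈ J, F j).ncard : ℝ) := hdouble

end

theorem epsilon_disjoint_subcollection_general {G : Type*} [Groupoid G] {I : Type*} [Fintype I]
    (A : Set (GArr G)) (hAfin : ∀ u : G, (srcFiber A u).Finite)
    (Afam : I → Set (GArr G)) (hsub : ∀ i : I, Afam i ⊆ A)
    (M : ℕ) (hM : 0 < M)
    (lam ε : ℝ) (hε0 : 0 ≤ ε) (hε2 : ε ≤ 1 / 2)
    (hmult : ∀ u : G, (∃ a ∈ A, a.src = u) → ∀ g ∈ srcFiber A u,
      ({i : I | g ∈ srcFiber (Afam i) u}).ncard ≤ M)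
    (hcover : ∀ u : G, (∃ a ∈ A, a.src = u) →
      lam * M * ((srcFiber A u).ncard : ℝ) ≤ ∑ i : I, ((srcFiber (Afam i) u).ncard : ℝ)) :
    ∀ u : G, (∃ a ∈ A, a.src = u) →
      ∃ J : Finset I,
        (∃ Ahat : I → Set (GArr G),
          (∀ j ∈ J, Ahat j ⊆ srcFiber (Afam j) u) ∧
          (∀ j ∈ J, ∀ k ∈ J, j ≠ k → Disjoint (Ahat j) (Ahat k)) ∧
          (∀ j ∈ J, (1 - ε) * ((srcFiber (Afam j) u).ncard : ℝ) ≤ ((Ahat j).ncard : ℝ))) ∧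
        ε * lam * ((srcFiber A u).ncard : ℝ) ≤
          ((⋃ j ∈ J, srcFiber (Afam j) u).ncard : ℝ) := fun u hu ↦
  exists_epsDisjoint_mul_ncard_le_ncard_biUnion (hAfin u)
    (fun i _ ha ↦ ⟨hsub i ha.1, ha.2⟩) hM hε0 (by linarith) (hmult u hu) (hcover u hu)

/-- cf. Lemma 3.5. Let `A` be a set of arrows with finite source fibers and
let `(A_i)_{i ∈ I}` be a finite family of subsets of `A` forming a `λ`-even covering of `A`
with multiplicity `M`. If `0 < λ ≤ 1` and `0 ≤ ε ≤ 1/2`, then for each unit `u ∈ s(A)` there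
is a subset `J_u ⊆ I` such that `(A_j u)_{j ∈ J_u}` is `ε`-disjoint and
`|⋃_{j ∈ J_u} A_j u| ≥ ε·λ·|Au|`. -/
theorem epsilon_disjoint_subcollection {G : Type*} [Groupoid G] {I : Type*} [Fintype I]
    (A : Set (GArr G)) (hAfin : ∀ u : G, (srcFiber A u).Finite)
    (Afam : I → Set (GArr G)) (hsub : ∀ i : I, Afam i ⊆ A)
    (M : ℕ) (hM : 0 < M)
    (lam ε : ℝ) (hlam0 : 0 < lam) (hlam1 : lam ≤ 1) (hε0 : 0 ≤ ε) (hε2 : ε ≤ 1 / 2)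
    (hmult : ∀ u : G, (∃ a ∈ A, a.src = u) → ∀ g ∈ srcFiber A u,
      ({i : I | g ∈ srcFiber (Afam i) u}).ncard ≤ M)
    (hcover : ∀ u : G, (∃ a ∈ A, a.src = u) →
      lam * M * ((srcFiber A u).ncard : ℝ) ≤ ∑ i : I, ((srcFiber (Afam i) u).ncard : ℝ)) :
    ∀ u : G, (∃ a ∈ A, a.src = u) →
      ∃ J : Finset I,
        (∃ Ahat : I → Set (GArr G),
          (∀ j ∈ J, Ahat j ⊆ srcFiber (Afam j) u) ∧
          (∀ j ∈ J, ∀ k ∈ J, j ≠ k → Disjoint (Ahat j) (Ahat k)) ∧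
          (∀ j ∈ J, (1 - ε) * ((srcFiber (Afam j) u).ncard : ℝ) ≤ ((Ahat j).ncard : ℝ))) ∧
        ε * lam * ((srcFiber A u).ncard : ℝ) ≤
          ((⋃ j ∈ J, srcFiber (Afam j) u).ncard : ℝ) :=
  epsilon_disjoint_subcollection_general A hAfin Afam hsub M hM lam ε hε0 hε2 hmult hcover
end

section
/- Let G be a groupoid, let C and A be sets of arrows of G, and let c be an arrow of G. Set A r(c) := {a ∈ A : s(a) = r(c)} and Ac := {ac : a ∈ A, s(a) = r(c)}. Then every g ∈ ∂_C(Ac) satisfies s(g) = s(c), and the map g ↦ gc⁻¹ defines an injection from ∂_C(Ac) into ∂_C(A r(c)). In particular, if ∂_C(A r(c)) is finite then |∂_C(Ac)| ≤ |∂_C(A r(c))|. -/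
open CategoryTheory

variable {G : Type*} [Groupoid G]

lemma GArr.comp_assoc (a b d : GArr G) (h1 : b.tgt = a.src) (h2 : d.tgt = b.src) :
    (a.comp b h1).comp d h2 = a.comp (b.comp d h2) h1 := by
  obtain ⟨as, at_, ah⟩ := a; obtain ⟨bs, bt, bh⟩ := b; obtain ⟨ds, dt, dh⟩ := d
  cases h1; cases h2; simp [GArr.comp]

lemma GArr.comp_inv_self (x c : GArr G) (h : c.tgt = x.src) :
    (x.comp c h).comp c.inv rfl = x := by
  obtain ⟨xs, xt, xh⟩ := x; cases h; simp [GArr.comp, GArr.inv]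

lemma GArr.inv_comp_self (x c : GArr G) (h : (GArr.inv c).tgt = x.src) :
    (x.comp c.inv h).comp c rfl = x := by
  obtain ⟨xs, xt, xh⟩ := x
  have h' : c.src = xs := h
  cases h'; simp [GArr.comp, GArr.inv]

lemma GArr.comp_right_cancel (g g' c : GArr G) (h : c.tgt = g.src) (h' : c.tgt = g'.src)
    (e : g.comp c h = g'.comp c h') : g = g' := by
  obtain ⟨gs, gt, gh⟩ := g; obtain ⟨gs', gt', gh'⟩ := g'
  cases h; cases h'
  simp only [GArr.comp, eqToHom_refl, Category.id_comp, GArr.mk.injEq, heq_eq_eq,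
    true_and] at e
  obtain ⟨e1, e2⟩ := e
  subst e1
  rw [heq_eq_eq] at e2
  have e3 := congrArg (fun m => Groupoid.inv c.hom ≫ m) e2
  simp only [← Category.assoc, Groupoid.inv_comp, Category.id_comp] at e3
  simp [e3]

/-- For sets of arrows `C`, `A` and an arrow `c`: every `g ∈ ∂_C(Ac)` has
`s(g) = s(c)`; the map `g ↦ g c⁻¹` is an injection of `∂_C(Ac)` into `∂_C(A r(c))`; and
consequently, if `∂_C(A r(c))` is finite then `|∂_C(Ac)| ≤ |∂_C(A r(c))|`. -/
theorem cBoundary_smul {G : Type*} [Groupoid G] (C A : Set (GArr G)) (c : GArr G) :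
    (∀ g ∈ cBoundary C (smulSet A c), g.src = c.src) ∧
      (∃ f : cBoundary C (smulSet A c) → cBoundary C (srcFiber A c.tgt),
        Function.Injective f ∧
          ∀ g : cBoundary C (smulSet A c),
            ∃ h : (GArr.inv c).tgt = (g : GArr G).src,
              (f g : GArr G) = (g : GArr G).comp (GArr.inv c) h) ∧
      ((cBoundary C (srcFiber A c.tgt)).Finite →
        (cBoundary C (smulSet A c)).ncard ≤ (cBoundary C (srcFiber A c.tgt)).ncard) := by
  -- source of any element of `smulSet C g` is `g.src`
  have src_smul : ∀ (D : Set (GArr G)) (g x : GArr G), x ∈ smulSet D g → x.src = g.src := by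
    rintro D g x ⟨c', _, h, rfl⟩; rfl
  -- source of any element of `smulSet A c` is `c.src`
  have hsrc : ∀ g ∈ cBoundary C (smulSet A c), g.src = c.src := by
    rintro g ⟨⟨x, hxC, hxA⟩, -⟩
    have h1 : x.src = g.src := src_smul C g x hxC
    have h2 : x.src = c.src := src_smul A c x hxA
    rw [← h1, h2]
  refine ⟨hsrc, ?_⟩
  -- membership transfer
  have mem_iff : ∀ (x : GArr G) (hx : (GArr.inv c).tgt = x.src),
      x ∈ smulSet A c ↔ x.comp c.inv hx ∈ srcFiber A c.tgt := by
    intro x hx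
    constructor
    · rintro ⟨a, ha, h, rfl⟩
      rw [GArr.comp_inv_self]
      exact ⟨ha, h.symm⟩
    · rintro ⟨hA, hs⟩
      exact ⟨x.comp c.inv hx, hA, rfl, (GArr.inv_comp_self x c hx).symm⟩
  have smul_mem : ∀ (g x : GArr G) (hg : (GArr.inv c).tgt = g.src) (hx : (GArr.inv c).tgt = x.src),
      x ∈ smulSet C g → x.comp c.inv hx ∈ smulSet C (g.comp c.inv hg) := by
    rintro g x hg hx ⟨c', hc', h, rfl⟩
    exact ⟨c', hc', h, GArr.comp_assoc c' g c.inv h hg⟩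
  -- the map
  have hmem : ∀ (g : GArr G) (hg : g ∈ cBoundary C (smulSet A c)),
      g.comp c.inv (hsrc g hg).symm ∈ cBoundary C (srcFiber A c.tgt) := by
    intro g hg
    obtain ⟨⟨x, hxC, hxA⟩, ⟨y, hyC, hyA⟩⟩ := hg
    have hgsrc : (GArr.inv c).tgt = g.src := (hsrc g ⟨⟨x, hxC, hxA⟩, ⟨y, hyC, hyA⟩⟩).symm
    have hxs : (GArr.inv c).tgt = x.src := by
      rw [src_smul C g x hxC]; exact hgsrc
    have hys : (GArr.inv c).tgt = y.src := by
      rw [src_smul C g y hyC]; exact hgsrc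
    constructor
    · exact ⟨x.comp c.inv hxs, smul_mem g x hgsrc hxs hxC, (mem_iff x hxs).1 hxA⟩
    · refine ⟨y.comp c.inv hys, smul_mem g y hgsrc hys hyC, fun hy => hyA ?_⟩
      exact (mem_iff y hys).2 hy
  set f : cBoundary C (smulSet A c) → cBoundary C (srcFiber A c.tgt) :=
    fun g => ⟨(g : GArr G).comp c.inv (hsrc g g.2).symm, hmem g g.2⟩ with hf
  have hinj : Function.Injective f := by
    intro g g' e
    have e' : (g : GArr G).comp c.inv (hsrc g g.2).symm
        = (g' : GArr G).comp c.inv (hsrc g' g'.2).symm := congrArg Subtype.val e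
    exact Subtype.ext (GArr.comp_right_cancel _ _ c.inv _ _ e')
  refine ⟨⟨f, hinj, fun g => ⟨(hsrc g g.2).symm, rfl⟩⟩, ?_⟩
  intro hfin
  have : Finite (cBoundary C (srcFiber A c.tgt)) := hfin.to_subtype
  rw [← Nat.card_coe_set_eq, ← Nat.card_coe_set_eq]
  exact Nat.card_le_card_of_injective f hinj
end

section
/- Let A be a C*-algebra and let f, w ∈ A with f self-adjoint (f* = f). Then ‖fw − wf‖² ≤ ‖w* f² w − f² w* w‖ + 2·‖f‖·‖w* f w − f w* w‖. -/
/-!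
For `c = fw - wf` the C*-identity gives `‖c‖² = ‖c* c‖`, and when `f` is self-adjoint
`c* c` expands to `D - f E - E f` with `D = w* f² w - f² w* w` and `E = w* f w - f w* w`;
the triangle inequality finishes.
-/

theorem star_commutator_mul_commutator {R : Type*} [NonUnitalRing R] [StarRing R]
    {f : R} (hf : IsSelfAdjoint f) (w : R) :
    star (f * w - w * f) * (f * w - w * f) =
      (star w * (f * f) * w - f * f * (star w * w)) -
        f * (star w * f * w - f * (star w * w)) - (star w * f * w - f * (star w * w)) * f := by
  simp only [star_sub, star_mul, hf.star_eq]
  noncomm_ring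

theorem norm_sub_mul_sub_mul_le {R : Type*} [NonUnitalSeminormedRing R] (d e f : R) :
    ‖d - f * e - e * f‖ ≤ ‖d‖ + 2 * ‖f‖ * ‖e‖ :=
  calc ‖d - f * e - e * f‖ ≤ ‖d‖ + ‖f * e‖ + ‖e * f‖ :=
      (norm_sub_le _ _).trans (by gcongr; exact norm_sub_le _ _)
    _ ≤ ‖d‖ + ‖f‖ * ‖e‖ + ‖e‖ * ‖f‖ := by gcongr <;> exact norm_mul_le _ _
    _ = ‖d‖ + 2 * ‖f‖ * ‖e‖ := by ring

/-- In a C*-algebra, for `f` self-adjoint and any `w`,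
`‖fw − wf‖² ≤ ‖w* f² w − f² w* w‖ + 2·‖f‖·‖w* f w − f w* w‖`. -/
theorem norm_commutator_sq_le {A : Type*} [NonUnitalCStarAlgebra A]
    (f w : A) (hf : star f = f) :
    ‖f * w - w * f‖ ^ 2 ≤
      ‖star w * (f * f) * w - (f * f) * (star w * w)‖ +
        2 * ‖f‖ * ‖star w * f * w - f * (star w * w)‖ := by
  rw [sq, ← CStarRing.norm_star_mul_self, star_commutator_mul_commutator hf]
  exact norm_sub_mul_sub_mul_le _ _ _
end
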